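/- arXiv:1307.4505 — 5 statements merged into one kernel-verified Lean document; each statement's English description precedes it below -/
import Mathlib

section
/- Let Γ > 0, let e satisfy 0 ≤ e ≤ Γ, and let (η_k)_{k≥1} be any sequence of real numbers. Let E_k(Γ) be the finite-buffer process and Ē_k the infinite-buffer process, both started from e and driven by the same sequence. Define τ(Γ) = inf{k ≥ 0 : E_k(Γ) = Γ} and τ'(Γ) = inf{k ≥ 0 : Ē_k ≥ Γ} (with value +∞ if the set is empty). Then τ(Γ) = τ'(Γ), and E_k(Γ) = Ē_k for every k < τ'(Γ). -/
/-- The finite-buffer process with buffer size `Γ`, initial level `e`, driven by the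
sequence `η`, where `η k` denotes the increment `η_{k+1}`:
`E₀ = e` and `E_{k+1} = min(Γ, max(0, E_k + η_{k+1}))`. -/
def bufferProc (Γ e : ℝ) (η : ℕ → ℝ) : ℕ → ℝ
  | 0 => e
  | k + 1 => min Γ (max 0 (bufferProc Γ e η k + η k))

/-- The infinite-buffer process: `Ē₀ = e` and `Ē_{k+1} = max(0, Ē_k + η_{k+1})`. -/
def infBufferProc (e : ℝ) (η : ℕ → ℝ) : ℕ → ℝ
  | 0 => e
  | k + 1 => max 0 (infBufferProc e η k + η k)

/-- The hitting time `τ(Γ) = inf {k ≥ 0 : E_k(Γ) = Γ}` of the finite-buffer process,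
with value `⊤` when the set is empty. -/
noncomputable def tauFin (Γ e : ℝ) (η : ℕ → ℝ) : ℕ∞ :=
  sInf ((↑) '' {k : ℕ | bufferProc Γ e η k = Γ})

/-- The first passage time `τ'(Γ) = inf {k ≥ 0 : Ē_k ≥ Γ}` of the infinite-buffer
process over level `Γ`, with value `⊤` when the set is empty. -/
noncomputable def tauInf (Γ e : ℝ) (η : ℕ → ℝ) : ℕ∞ :=
  sInf ((↑) '' {k : ℕ | Γ ≤ infBufferProc e η k})

lemma agree_aux (Γ e : ℝ) (η : ℕ → ℝ) (k : ℕ)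
    (h : ∀ j ≤ k, infBufferProc e η j < Γ) :
    bufferProc Γ e η k = infBufferProc e η k := by
  induction k with
  | zero => rfl
  | succ k ih =>
    have hk : ∀ j ≤ k, infBufferProc e η j < Γ :=
      fun j hj => h j (hj.trans (Nat.le_succ k))
    have hlt : infBufferProc e η (k + 1) ≤ Γ := (h (k + 1) le_rfl).le
    simp only [bufferProc, infBufferProc, ih hk]
    exact min_eq_right (by simpa [infBufferProc] using hlt)

theorem stmt6 (Γ e : ℝ) (hΓ : 0 < Γ) (he0 : 0 ≤ e) (heΓ : e ≤ Γ) (η : ℕ → ℝ) :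
    tauFin Γ e η = tauInf Γ e η ∧
      ∀ k : ℕ, (k : ℕ∞) < tauInf Γ e η → bufferProc Γ e η k = infBufferProc e η k := by
  by_cases hS : ∃ k, Γ ≤ infBufferProc e η k
  · set n := Nat.find hS with hn
    have hspec : Γ ≤ infBufferProc e η n := Nat.find_spec hS
    have hmin : ∀ j < n, infBufferProc e η j < Γ :=
      fun j hj => lt_of_not_ge (Nat.find_min hS hj)
    have hInf : tauInf Γ e η = (n : ℕ∞) := by
      refine le_antisymm (sInf_le ⟨n, hspec, rfl⟩) (le_sInf ?_)
      rintro _ ⟨m, hm, rfl⟩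
      exact_mod_cast Nat.find_min' hS hm
    have hEn' : ∀ N : ℕ, Γ ≤ infBufferProc e η N → (∀ j < N, infBufferProc e η j < Γ) →
        bufferProc Γ e η N = Γ := by
      intro N hsp hmn
      cases N with
      | zero => exact le_antisymm heΓ hsp
      | succ m =>
        have hm : bufferProc Γ e η m = infBufferProc e η m :=
          agree_aux Γ e η m (fun j hj => hmn j (Nat.lt_succ_of_le hj))
        show min Γ (max 0 (bufferProc Γ e η m + η m)) = Γ
        rw [hm]
        exact min_eq_left hsp
    have hEn : bufferProc Γ e η n = Γ := hEn' n hspec hmin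
    have hFin : tauFin Γ e η = (n : ℕ∞) := by
      refine le_antisymm (sInf_le ⟨n, hEn, rfl⟩) (le_sInf ?_)
      rintro _ ⟨m, hm, rfl⟩
      simp only [Set.mem_setOf_eq] at hm
      rcases lt_or_ge m n with h | h
      · exfalso
        have := agree_aux Γ e η m (fun j hj => hmin j (lt_of_le_of_lt hj h))
        rw [this] at hm
        exact absurd hm (ne_of_lt (hmin m h))
      · exact_mod_cast h
    refine ⟨hFin.trans hInf.symm, fun k hk => ?_⟩
    rw [hInf] at hk
    have hkn : k < n := by exact_mod_cast hk
    exact agree_aux Γ e η k (fun j hj => hmin j (lt_of_le_of_lt hj hkn))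
  · push_neg at hS
    have hagree : ∀ k, bufferProc Γ e η k = infBufferProc e η k :=
      fun k => agree_aux Γ e η k (fun j _ => hS j)
    have h2 : {k : ℕ | Γ ≤ infBufferProc e η k} = ∅ := by
      ext k; simp [not_le.mpr (hS k)]
    have h1 : {k : ℕ | bufferProc Γ e η k = Γ} = ∅ := by
      ext k
      simp only [Set.mem_setOf_eq, Set.mem_empty_iff_false, iff_false]
      rw [hagree k]
      exact ne_of_lt (hS k)
    constructor
    · simp [tauFin, tauInf, h1, h2]
    · intro k _; exact hagree k
end

section
/- Let (η_k)_{k≥1} be an i.i.d. sequence of integrable real-valued random variables with E[η_1] > 0, let α ≥ 1, and suppose E[(max(−η_1, 0))^α] < ∞. Let Γ > 0 and 0 ≤ e ≤ Γ, and let E_k(Γ) be the finite-buffer process started from e and driven by (η_k). Then the hitting time τ(Γ) = inf{k ≥ 0 : E_k(Γ) = Γ} satisfies E[τ(Γ)^α] < ∞. -/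
/-!
Truncating `η` from above at a level `c` keeps its mean `μ` positive; fix `N` with `N μ > Γ` and
cut time into blocks of length `N`. Below the level `Γ` the buffer dominates the free random
walk, so if it has not reached `Γ` by the end of block `k`, the increments of that block sum to
less than `Γ`. The truncated block sum is bounded by `N c` and has mean `N μ > Γ`, so by a
reverse Markov inequality this has probability at most some `q < 1`, independently of the past.
Hence `P(τ > k N) ≤ q ^ k`, and geometric tails give moments of every order.
-/

open MeasureTheory ProbabilityTheory
open scoped ENNReal

section Deterministic

variable {Γ e : ℝ} {η : ℕ → ℝ}

lemma bufferProc_nonneg (he : 0 ≤ e) (hΓ : 0 ≤ Γ) : ∀ k, 0 ≤ bufferProc Γ e η k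
  | 0 => he
  | _ + 1 => le_min hΓ (le_max_left _ _)

lemma bufferProc_le (heΓ : e ≤ Γ) : ∀ k, bufferProc Γ e η k ≤ Γ
  | 0 => heΓ
  | _ + 1 => min_le_left _ _

lemma bufferProc_add_le_succ {k : ℕ} (h : bufferProc Γ e η (k + 1) ≠ Γ) :
    bufferProc Γ e η k + η k ≤ bufferProc Γ e η (k + 1) := by
  have hmin : bufferProc Γ e η (k + 1) = max 0 (bufferProc Γ e η k + η k) :=
    (min_choice _ _).resolve_left h
  exact hmin ▸ le_max_right _ _

lemma bufferProc_add_sum_le {l r : ℕ} (hlr : l ≤ r)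
    (h : ∀ m, l < m → m ≤ r → bufferProc Γ e η m ≠ Γ) :
    bufferProc Γ e η l + ∑ i ∈ Finset.Ico l r, η i ≤ bufferProc Γ e η r := by
  induction r, hlr using Nat.le_induction with
  | base => simp
  | succ r hlr ih =>
    rw [Finset.sum_Ico_succ_top hlr, ← add_assoc]
    have := ih fun m hlm hmr => h m hlm (hmr.trans r.le_succ)
    have := bufferProc_add_le_succ (h (r + 1) (Nat.lt_succ_of_le hlr) le_rfl)
    linarith

lemma lt_tauFin_iff {m : ℕ} : (m : ℕ∞) < tauFin Γ e η ↔ ∀ i ≤ m, bufferProc Γ e η i ≠ Γ := by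
  rw [tauFin, ← ENat.add_one_le_iff (ENat.natCast_ne_top m), le_sInf_iff]
  simp only [Set.mem_image, Set.mem_ofPred_eq, forall_exists_index, and_imp,
    forall_apply_eq_imp_iff₂]
  norm_cast
  exact ⟨fun h i hi hΓ => absurd (h i hΓ) (by omega),
    fun h i hΓ => by by_contra! hlt; exact h i (by omega) hΓ⟩

lemma sum_Ico_lt_of_lt_tauFin (he : 0 ≤ e) (heΓ : e ≤ Γ) {l r : ℕ} (hlr : l ≤ r)
    (hτ : (r : ℕ∞) < tauFin Γ e η) :
    ∑ i ∈ Finset.Ico l r, η i < Γ := by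
  rw [lt_tauFin_iff] at hτ
  have := bufferProc_add_sum_le hlr fun m _ hmr => hτ m hmr
  have := bufferProc_nonneg (η := η) he (he.trans heΓ) l
  have := (bufferProc_le (η := η) heΓ r).lt_of_ne (hτ r le_rfl)
  linarith

end Deterministic

section Measurability

variable {X : Type*} {Γ e : ℝ} {g : ℕ → X → ℝ}

lemma measurable_bufferProc {mX : MeasurableSpace X} :
    ∀ {m : ℕ}, (∀ i < m, Measurable (g i)) →
      Measurable fun x => bufferProc Γ e (fun n => g n x) m
  | 0, _ => measurable_const
  | m + 1, hg => measurable_const.min <| measurable_const.max <|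
      (measurable_bufferProc fun i hi => hg i (hi.trans m.lt_succ_self)).add (hg m m.lt_succ_self)

lemma measurableSet_lt_tauFin {mX : MeasurableSpace X} {m : ℕ} (hg : ∀ i < m, Measurable (g i)) :
    MeasurableSet {x | (m : ℕ∞) < tauFin Γ e fun n => g n x} := by
  simp only [lt_tauFin_iff, Set.ofPred_forall]
  exact .iInter fun i => .iInter fun hi =>
    (measurable_bufferProc fun j hj => hg j (hj.trans_le hi)) (measurableSet_singleton Γ).compl

lemma ENat.measurable_of_measurableSet_lt [MeasurableSpace X] {f : X → ℕ∞}
    (hf : ∀ n : ℕ, MeasurableSet {x | (n : ℕ∞) < f x}) : Measurable f := by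
  refine ENat.measurable_iff.2 fun n => ?_
  cases n with
  | zero => convert (hf 0).compl using 1; ext; simp
  | succ n =>
    convert (hf n).diff (hf (n + 1)) using 1
    ext x
    simp only [Set.mem_preimage, Set.mem_singleton_iff, Set.mem_sdiff, Set.mem_ofPred_eq, not_lt]
    constructor
    · rintro h; rw [h]; norm_cast; omega
    · rintro ⟨h1, h2⟩; exact le_antisymm (by exact_mod_cast h2) (Order.add_one_le_of_lt h1)

lemma measurable_tauFin [MeasurableSpace X] (hg : ∀ n, Measurable (g n)) :
    Measurable fun x => tauFin Γ e fun n => g n x :=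
  ENat.measurable_of_measurableSet_lt fun _ => measurableSet_lt_tauFin fun i _ => hg i

end Measurability

section Probability

variable {Ω : Type*} [MeasurableSpace Ω] {P : Measure Ω}

lemma exists_integral_min_pos [IsFiniteMeasure P] {X : Ω → ℝ} (hX : Integrable X P)
    (hpos : 0 < ∫ ω, X ω ∂P) :
    ∃ c : ℝ, 0 < ∫ ω, min (X ω) c ∂P := by
  have hlim : Filter.Tendsto (fun n : ℕ => ∫ ω, min (X ω) n ∂P) Filter.atTop
      (nhds (∫ ω, X ω ∂P)) := by
    refine integral_tendsto_of_tendsto_of_monotone (fun n => hX.inf (integrable_const _)) hX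
      (.of_forall fun ω n m hnm => min_le_min_left _ (Nat.cast_le.2 hnm)) (.of_forall fun ω => ?_)
    exact tendsto_atTop_of_eventually_const (i₀ := ⌈X ω⌉₊)
      fun n hn => min_eq_left ((Nat.le_ceil _).trans (Nat.cast_le.2 hn))
  obtain ⟨n, hn⟩ := (hlim.eventually (lt_mem_nhds hpos)).exists
  exact ⟨n, hn⟩

lemma measure_lt_le_one_sub [IsProbabilityMeasure P] {S : Ω → ℝ} {M Γ : ℝ} (hS : Integrable S P)
    (hSM : ∀ ω, S ω ≤ M) (hM : 0 < M) (hΓ : 0 ≤ Γ) :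
    P {ω | S ω < Γ} ≤ 1 - ENNReal.ofReal ((∫ ω, S ω ∂P - Γ) / M) := by
  set A := {ω | Γ ≤ S ω}
  have hA : NullMeasurableSet A P := nullMeasurableSet_le aemeasurable_const hS.aemeasurable
  have hle : ∫ ω, S ω ∂P ≤ Γ + M * P.real A := by
    calc ∫ ω, S ω ∂P ≤ ∫ ω, (Γ + A.indicator (fun _ => M) ω) ∂P := by
          refine integral_mono hS ((integrable_const Γ).add ((integrable_const M).indicator₀ hA))
            fun ω => ?_
          by_cases hω : ω ∈ A
          · simp only [Set.indicator_of_mem hω]; linarith [hSM ω]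
          · simp only [Set.indicator_of_notMem hω]; exact (not_le.1 hω).le.trans (by simp)
      _ = Γ + M * P.real A := by
          rw [integral_add (integrable_const Γ) ((integrable_const M).indicator₀ hA),
            integral_indicator₀ hA]
          simp [mul_comm]
  have hA' : ENNReal.ofReal ((∫ ω, S ω ∂P - Γ) / M) ≤ P A := by
    rw [ENNReal.ofReal_le_iff_le_toReal (measure_ne_top P A), div_le_iff₀ hM]
    exact (sub_le_iff_le_add'.2 hle).trans_eq (mul_comm _ _)
  have hcompl : {ω | S ω < Γ} = Aᶜ := by ext; simp [A]
  rw [hcompl, prob_compl_eq_one_sub₀ hA]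
  exact tsub_le_tsub_left hA' 1

lemma measure_sum_lt_le [IsProbabilityMeasure P] {ι : Type*} {η : ι → Ω → ℝ} {s : Finset ι}
    {c μ Γ : ℝ} (hc : 0 < c) (hs : s.Nonempty) (hΓ : 0 ≤ Γ)
    (hint : ∀ i ∈ s, Integrable (η i) P) (hμ : ∀ i ∈ s, ∫ ω, min (η i ω) c ∂P = μ) :
    P {ω | ∑ i ∈ s, η i ω < Γ} ≤ 1 - ENNReal.ofReal ((s.card * μ - Γ) / (s.card * c)) := by
  set S := fun ω => ∑ i ∈ s, min (η i ω) c
  have hint' (i : ι) (hi : i ∈ s) : Integrable (fun ω => min (η i ω) c) P :=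
    (hint i hi).inf (integrable_const c)
  have hS : Integrable S P := integrable_finsetSum _ hint'
  have hSM (ω : Ω) : S ω ≤ s.card * c :=
    (Finset.sum_le_sum fun i _ => min_le_right _ c).trans_eq (by simp)
  have hES : ∫ ω, S ω ∂P = s.card * μ := by
    rw [integral_finsetSum _ hint', Finset.sum_congr rfl hμ]
    simp
  calc P {ω | ∑ i ∈ s, η i ω < Γ} ≤ P {ω | S ω < Γ} :=
        measure_mono fun ω hω => (Finset.sum_le_sum fun i _ => min_le_left _ c).trans_lt hω
    _ ≤ _ := hES ▸ measure_lt_le_one_sub hS hSM (by positivity) hΓ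

/-- The event `{l < τ}` only involves `η₀, …, η_{l-1}`, so it is independent of the block
`η_l, …, η_{r-1}`. -/
lemma measure_lt_tauFin_inter_sum_lt {η : ℕ → Ω → ℝ} (hmeas : ∀ n, Measurable (η n))
    (hindep : iIndepFun η P) (Γ e : ℝ) (l r : ℕ) :
    P ({ω | (l : ℕ∞) < tauFin Γ e fun n => η n ω} ∩ {ω | ∑ i ∈ Finset.Ico l r, η i ω < Γ}) =
      P {ω | (l : ℕ∞) < tauFin Γ e fun n => η n ω} * P {ω | ∑ i ∈ Finset.Ico l r, η i ω < Γ} := by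
  let m : ℕ → MeasurableSpace Ω := fun n => MeasurableSpace.comap (η n) inferInstance
  have hη (s : Set ℕ) {i : ℕ} (hi : i ∈ s) : Measurable[⨆ j ∈ s, m j] (η i) :=
    Measurable.of_comap_le (le_iSup₂ (f := fun j (_ : j ∈ s) => m j) i hi)
  have hind := indep_iSup_of_disjoint (fun n => (hmeas n).comap_le)
    ((iIndepFun_iff_iIndep _ _ _).1 hindep) (S := Set.Iio l) (T := Set.Ico l r)
    (Set.disjoint_left.2 fun i hi hi' => (Set.mem_Iio.1 hi).not_ge (Set.mem_Ico.1 hi').1)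
  refine (Indep_iff _ _ _).1 hind _ _ (measurableSet_lt_tauFin fun i hi => hη _ hi) ?_
  exact measurableSet_lt (Finset.measurable_sum _ fun i hi => hη _ (Finset.coe_Ico l r ▸ hi))
    measurable_const

lemma measure_lt_tauFin_le_pow [IsProbabilityMeasure P] {η : ℕ → Ω → ℝ}
    (hmeas : ∀ n, Measurable (η n)) (hindep : iIndepFun η P) {Γ e : ℝ} (he : 0 ≤ e)
    (heΓ : e ≤ Γ) {N : ℕ} {Q : ℝ≥0∞}
    (hblock : ∀ k : ℕ, P {ω | ∑ i ∈ Finset.Ico (k * N) ((k + 1) * N), η i ω < Γ} ≤ Q) (k : ℕ) :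
    P {ω | ((k * N : ℕ) : ℕ∞) < tauFin Γ e fun n => η n ω} ≤ Q ^ k := by
  induction k with
  | zero => simpa using prob_le_one
  | succ k ih =>
    have hkN : k * N ≤ (k + 1) * N := Nat.mul_le_mul_right N k.le_succ
    calc P {ω | (((k + 1) * N : ℕ) : ℕ∞) < tauFin Γ e fun n => η n ω}
        ≤ P ({ω | ((k * N : ℕ) : ℕ∞) < tauFin Γ e fun n => η n ω} ∩
            {ω | ∑ i ∈ Finset.Ico (k * N) ((k + 1) * N), η i ω < Γ}) :=
          measure_mono fun ω hω =>
            ⟨(Nat.cast_le (α := ℕ∞) |>.2 hkN).trans_lt hω, sum_Ico_lt_of_lt_tauFin he heΓ hkN hω⟩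
      _ = _ := measure_lt_tauFin_inter_sum_lt hmeas hindep Γ e _ _
      _ ≤ Q ^ k * Q := mul_le_mul' ih (hblock k)
      _ = Q ^ (k + 1) := (pow_succ Q k).symm

end Probability

section Moments

variable {Ω : Type*} [MeasurableSpace Ω] {P : Measure Ω}

lemma rpow_le_tsum_ite (t : ℕ∞) {α : ℝ} (hα : 0 < α) {N : ℕ} (hN : 0 < N) :
    (t : ℝ≥0∞) ^ α ≤
      ∑' k : ℕ, if ((k * N : ℕ) : ℕ∞) < t then (((k + 1) * N : ℕ) : ℝ≥0∞) ^ α else 0 := by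
  have hone (k : ℕ) : 1 ≤ (((k + 1) * N : ℕ) : ℝ≥0∞) ^ α :=
    ENNReal.one_le_rpow (by exact_mod_cast Nat.mul_pos k.succ_pos hN) hα
  induction t using ENat.recTopCoe with
  | top =>
    simp only [ENat.toENNReal_top, ENat.natCast_lt_top, if_true]
    rw [top_unique ((ENNReal.tsum_const_eq_top_of_ne_zero one_ne_zero).symm.le.trans
      (ENNReal.tsum_le_tsum hone))]
    exact le_top
  | coe n =>
    rcases n with _ | n
    · simp [ENNReal.zero_rpow_of_pos hα]
    set k := n / N
    have hlt : k * N < n + 1 := Nat.lt_succ_of_le (Nat.div_mul_le_self n N)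
    have hle : n + 1 ≤ (k + 1) * N := by rw [Nat.succ_mul]; exact Nat.lt_div_mul_add hN
    calc ((n + 1 : ℕ) : ℕ∞).toENNReal ^ α ≤ (((k + 1) * N : ℕ) : ℝ≥0∞) ^ α := by
          simpa using ENNReal.rpow_le_rpow (by exact_mod_cast hle) hα.le
      _ = _ := (if_pos (by exact_mod_cast hlt)).symm
      _ ≤ _ := ENNReal.le_tsum k

lemma tsum_rpow_mul_pow_lt_top (α : ℝ) {N : ℕ} (hN : 0 < N) {Q : ℝ≥0∞} (hQ : Q < 1) :
    ∑' k : ℕ, (((k + 1) * N : ℕ) : ℝ≥0∞) ^ α * Q ^ k < ⊤ := by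
  obtain ⟨r, hr0, hQr, hr1⟩ := ENNReal.lt_iff_exists_real_btwn.1 hQ
  have hr_pos : 0 < r := ENNReal.ofReal_pos.1 (hQr.trans_le' zero_le)
  have hr_lt : r < 1 := ENNReal.ofReal_lt_one.1 hr1
  set m := ⌈α⌉₊
  have hsum : Summable fun k : ℕ => (((k + 1) * N : ℕ) : ℝ) ^ m * r ^ k := by
    have h := (summable_nat_add_iff 1).2 (summable_pow_mul_geometric_of_norm_lt_one (R := ℝ) m
      (r := r) (by rwa [Real.norm_of_nonneg hr0]))
    refine (h.mul_left (r⁻¹ * N ^ m)).congr fun k => ?_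
    rw [Nat.cast_mul, mul_pow, pow_succ]
    field_simp
  calc ∑' k : ℕ, (((k + 1) * N : ℕ) : ℝ≥0∞) ^ α * Q ^ k
      ≤ ∑' k : ℕ, ENNReal.ofReal ((((k + 1) * N : ℕ) : ℝ) ^ m * r ^ k) := by
        refine ENNReal.tsum_le_tsum fun k => ?_
        have hone : 1 ≤ (((k + 1) * N : ℕ) : ℝ≥0∞) := by exact_mod_cast Nat.mul_pos k.succ_pos hN
        calc (((k + 1) * N : ℕ) : ℝ≥0∞) ^ α * Q ^ k
            ≤ (((k + 1) * N : ℕ) : ℝ≥0∞) ^ (m : ℝ) * ENNReal.ofReal r ^ k := by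
              gcongr
              exact Nat.le_ceil α
          _ = _ := by
              rw [ENNReal.rpow_natCast, ENNReal.ofReal_mul (by positivity),
                ENNReal.ofReal_pow (Nat.cast_nonneg _), ENNReal.ofReal_natCast,
                ENNReal.ofReal_pow hr0]
    _ = ENNReal.ofReal (∑' k : ℕ, (((k + 1) * N : ℕ) : ℝ) ^ m * r ^ k) :=
        (ENNReal.ofReal_tsum_of_nonneg (fun k => by positivity) hsum).symm
    _ < ⊤ := ENNReal.ofReal_lt_top

lemma lintegral_rpow_lt_top_of_tail {τ : Ω → ℕ∞} (hτ : Measurable τ) {α : ℝ} (hα : 0 < α)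
    {N : ℕ} (hN : 0 < N) {Q : ℝ≥0∞} (hQ : Q < 1)
    (htail : ∀ k : ℕ, P {ω | ((k * N : ℕ) : ℕ∞) < τ ω} ≤ Q ^ k) :
    ∫⁻ ω, (τ ω : ℝ≥0∞) ^ α ∂P < ⊤ := by
  have hmeas (k : ℕ) : MeasurableSet {ω | ((k * N : ℕ) : ℕ∞) < τ ω} :=
    hτ (MeasurableSet.of_discrete (s := Set.Ioi _))
  calc ∫⁻ ω, (τ ω : ℝ≥0∞) ^ α ∂P
      ≤ ∫⁻ ω, ∑' k : ℕ, {ω | ((k * N : ℕ) : ℕ∞) < τ ω}.indicator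
          (fun _ => (((k + 1) * N : ℕ) : ℝ≥0∞) ^ α) ω ∂P := by
        refine lintegral_mono fun ω => (rpow_le_tsum_ite (τ ω) hα hN).trans_eq ?_
        simp only [Set.indicator_apply, Set.mem_ofPred_eq]
    _ = ∑' k : ℕ, (((k + 1) * N : ℕ) : ℝ≥0∞) ^ α * P {ω | ((k * N : ℕ) : ℕ∞) < τ ω} := by
        rw [lintegral_tsum fun k => (measurable_const.indicator (hmeas k)).aemeasurable]
        simp only [lintegral_indicator_const (hmeas _)]
    _ ≤ ∑' k : ℕ, (((k + 1) * N : ℕ) : ℝ≥0∞) ^ α * Q ^ k :=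
        ENNReal.tsum_le_tsum fun k => by gcongr; exact htail k
    _ < ⊤ := tsum_rpow_mul_pow_lt_top α hN hQ

end Moments

theorem stmt9_general {Ω : Type*} [MeasurableSpace Ω] (P : Measure Ω) [IsProbabilityMeasure P]
    (η : ℕ → Ω → ℝ) (hmeas : ∀ n, Measurable (η n))
    (hindep : iIndepFun η P)
    (hident : ∀ n, IdentDistrib (η n) (η 0) P P)
    (hint : Integrable (η 0) P) (hmean : 0 < ∫ ω, η 0 ω ∂P)
    (α : ℝ) (hα : 1 ≤ α)
    (Γ e : ℝ) (he0 : 0 ≤ e) (heΓ : e ≤ Γ) :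
    ∫⁻ ω, ((tauFin Γ e (fun n => η n ω) : ℕ∞) : ℝ≥0∞) ^ α ∂P < ⊤ := by
  obtain ⟨c, hc⟩ := exists_integral_min_pos hint hmean
  set μ := ∫ ω, min (η 0 ω) c ∂P
  have hμ (n : ℕ) : ∫ ω, min (η n ω) c ∂P = μ :=
    ((hident n).comp (measurable_id.min measurable_const)).integral_eq
  have hμc : μ ≤ c := (integral_mono (hint.inf (integrable_const c)) (integrable_const c)
    fun ω => min_le_right _ c).trans_eq (by simp)
  have hc0 : 0 < c := hc.trans_le hμc
  obtain ⟨N, hN⟩ := exists_nat_gt (Γ / μ)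
  have hNpos : 0 < N := Nat.cast_pos.1 ((div_nonneg (he0.trans heΓ) hc.le).trans_lt hN)
  have hΓN : Γ < N * μ := (div_lt_iff₀ hc).1 hN
  set Q := 1 - ENNReal.ofReal ((N * μ - Γ) / (N * c))
  have hQ : Q < 1 := ENNReal.sub_lt_self ENNReal.one_ne_top one_ne_zero
    (ENNReal.ofReal_pos.2 (div_pos (by linarith) (mul_pos (Nat.cast_pos.2 hNpos) hc0))).ne'
  have hblock (k : ℕ) : P {ω | ∑ i ∈ Finset.Ico (k * N) ((k + 1) * N), η i ω < Γ} ≤ Q := by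
    have hcard : (Finset.Ico (k * N) ((k + 1) * N)).card = N := by simp [Nat.succ_mul]
    have h := measure_sum_lt_le (P := P) (s := Finset.Ico (k * N) ((k + 1) * N)) hc0
      (Finset.nonempty_Ico.2 (Nat.mul_lt_mul_of_pos_right k.lt_succ_self hNpos)) (he0.trans heΓ)
      (fun i _ => (hident i).integrable_iff.2 hint) (fun i _ => hμ i)
    rwa [hcard] at h
  exact lintegral_rpow_lt_top_of_tail (measurable_tauFin hmeas) (by linarith) hNpos hQ
    (measure_lt_tauFin_le_pow hmeas hindep he0 heΓ hblock)

theorem stmt9 {Ω : Type*} [MeasurableSpace Ω] (P : Measure Ω) [IsProbabilityMeasure P]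
    (η : ℕ → Ω → ℝ) (hmeas : ∀ n, Measurable (η n))
    (hindep : iIndepFun η P)
    (hident : ∀ n, IdentDistrib (η n) (η 0) P P)
    (hint : Integrable (η 0) P) (hmean : 0 < ∫ ω, η 0 ω ∂P)
    (α : ℝ) (hα : 1 ≤ α)
    (hneg : Integrable (fun ω => (max (-(η 0 ω)) 0) ^ α) P)
    (Γ e : ℝ) (hΓ : 0 < Γ) (he0 : 0 ≤ e) (heΓ : e ≤ Γ) :
    ∫⁻ ω, ((tauFin Γ e (fun n => η n ω) : ℕ∞) : ℝ≥0∞) ^ α ∂P < ⊤ :=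
  stmt9_general P η hmeas hindep hident hint hmean α hα Γ e he0 heΓ
end

section
/- Let p : ℤ → ℝ be a probability mass function (p(n) ≥ 0 for all n and ∑_{n∈ℤ} p(n) = 1) such that ∑_{n∈ℤ} n² p(n) < ∞. Then the Shannon entropy is finite: the series ∑_{n∈ℤ} (−p(n) · log p(n)) (with the convention 0 · log 0 = 0) converges to a finite value. -/
lemma aux_sum_inv : Summable fun n : ℤ => 1 / (1 + (n : ℝ) ^ 2) := by
  have hnat : Summable fun n : ℕ => 1 / (1 + (n : ℝ) ^ 2) := by
    have h1 : Summable fun n : ℕ => 1 / ((n : ℝ) + 1) ^ 2 := by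
      have := (summable_nat_add_iff 1).2 (Real.summable_one_div_nat_pow.2 one_lt_two)
      exact this.congr fun n => by push_cast; ring_nf
    refine (h1.mul_left 2).of_nonneg_of_le (fun n => by positivity) fun n => ?_
    rw [mul_one_div, div_le_div_iff₀ (by positivity) (by positivity)]
    nlinarith [sq_nonneg ((n : ℝ) - 1)]
  refine Summable.of_nat_of_neg hnat (hnat.congr fun n => ?_)
  push_cast; ring_nf

theorem stmt10 (p : ℤ → ℝ) (hnn : ∀ n, 0 ≤ p n) (hsum : ∑' n, p n = 1)
    (hmom : Summable fun n : ℤ => (n : ℝ) ^ 2 * p n) :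
    Summable fun n : ℤ => -(p n * Real.log (p n)) := by
  have hsp : Summable p := by
    by_contra h
    rw [tsum_eq_zero_of_not_summable h] at hsum
    norm_num at hsum
  have hp1 : ∀ n, p n ≤ 1 := fun n => hsum ▸ Summable.le_tsum hsp n fun m _ => hnn m
  have hg : Summable fun n : ℤ => 1 / (1 + (n : ℝ) ^ 2) + (n : ℝ) ^ 2 * p n :=
    aux_sum_inv.add hmom
  refine hg.of_nonneg_of_le (fun n => ?_) (fun n => ?_)
  · rw [neg_nonneg]
    exact mul_nonpos_of_nonneg_of_nonpos (hnn n) (Real.log_nonpos (hnn n) (hp1 n))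
  · rcases eq_or_lt_of_le (hnn n) with h0 | h0
    · rw [← h0]
      have := sq_nonneg (n : ℝ)
      have : (0:ℝ) ≤ 1 / (1 + (n : ℝ) ^ 2) := by positivity
      nlinarith
    · set x := p n
      set q : ℝ := 1 / (1 + (n : ℝ) ^ 2)
      have hq : 0 < q := by positivity
      have h1 : Real.log (q / x) ≤ q / x - 1 :=
        Real.log_le_sub_one_of_pos (by positivity)
      have h2 : x * Real.log (q / x) ≤ q - x := by
        have := mul_le_mul_of_nonneg_left h1 h0.le
        calc x * Real.log (q / x) ≤ x * (q / x - 1) := this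
          _ = q - x := by field_simp
      have h3 : Real.log (q / x) = Real.log q - Real.log x :=
        Real.log_div hq.ne' h0.ne'
      have h4 : -Real.log q = Real.log (1 + (n : ℝ) ^ 2) := by
        rw [show q = (1 + (n:ℝ)^2)⁻¹ by simp [q], Real.log_inv, neg_neg]
      have h5 : Real.log (1 + (n : ℝ) ^ 2) ≤ (n : ℝ) ^ 2 := by
        have := Real.log_le_sub_one_of_pos (show (0:ℝ) < 1 + (n:ℝ)^2 by positivity)
        linarith
      -- -x log x = x log(q/x) - x log q ≤ q - x + x * n^2 ≤ q + x*n^2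
      have hxlog : x * Real.log (1 + (n : ℝ) ^ 2) ≤ x * (n : ℝ) ^ 2 :=
        mul_le_mul_of_nonneg_left h5 h0.le
      nlinarith [h2, h3, h4, hxlog]
end

section
/- Let S be a nonempty finite set and let P be a row-stochastic matrix indexed by S × S (all entries nonnegative and each row sums to 1). Then the Cesàro averages of the matrix powers converge: the limit lim_{n→∞} (1/n) ∑_{k=1}^{n} P^k exists entrywise. -/
/-!
In the sup norm a row-stochastic matrix acts on `S → ℝ` as a contraction. For a linear
contraction `f`, the Birkhoff average of `(f - 1) x` telescopes to `(f^[n] x - x) / n → 0`,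
while a fixed point is its own average; so the fixed points and the range of `f - 1` meet only
in `0`, and by rank–nullity they are complementary in finite dimension. The mean ergodic theorem
then makes the averages converge to the projection onto the fixed points along `range (f - 1)`.
Applied to the `j`-th column of `P`, these averages are the Cesàro means of `(P ^ k) i j`.
-/

open Filter Topology

namespace LinearMap

variable {𝕜 E : Type*} [RCLike 𝕜] [NormedAddCommGroup E] [NormedSpace 𝕜 E]

theorem tendsto_birkhoffAverage_sub_one_apply (f : E →ₗ[𝕜] E) (hf : LipschitzWith 1 f) (x : E) :
    Tendsto (birkhoffAverage 𝕜 f _root_.id · ((f - 1) x)) atTop (𝓝 0) := by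
  have hbdd : Bornology.IsBounded (Set.range (_root_.id <| f^[·] x)) :=
    isBounded_iff_forall_norm_le.2 ⟨‖x‖, Set.forall_mem_range.2 fun n ↦ by
      simpa [iterate_map_zero (f : E →+ E) n] using (hf.iterate n).dist_le_mul x 0⟩
  simpa [birkhoffAverage, birkhoffSum, Finset.sum_sub_distrib, smul_sub,
    iterate_map_sub (f : E →+ E)] using tendsto_birkhoffAverage_apply_sub_birkhoffAverage 𝕜 hbdd

theorem disjoint_eqLocus_range_sub_one (f : E →ₗ[𝕜] E) (hf : LipschitzWith 1 f) :
    Disjoint (eqLocus f 1) (range (f - 1)) := by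
  rw [Submodule.disjoint_def]
  rintro _ hfix ⟨x, rfl⟩
  have hfix : Function.IsFixedPt f ((f - 1) x) := hfix
  exact tendsto_nhds_unique (hfix.tendsto_birkhoffAverage 𝕜 _root_.id)
    (f.tendsto_birkhoffAverage_sub_one_apply hf x)

theorem isCompl_eqLocus_range_sub_one [FiniteDimensional 𝕜 E] (f : E →ₗ[𝕜] E)
    (hf : LipschitzWith 1 f) : IsCompl (eqLocus f 1) (range (f - 1)) := by
  refine (Submodule.isCompl_iff_disjoint _ _ ?_).2 (f.disjoint_eqLocus_range_sub_one hf)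
  rw [eqLocus_eq_ker_sub, add_comm, finrank_range_add_finrank_ker]

theorem exists_tendsto_birkhoffAverage [FiniteDimensional 𝕜 E] (f : E →ₗ[𝕜] E)
    (hf : LipschitzWith 1 f) (x : E) :
    ∃ y, Tendsto (birkhoffAverage 𝕜 f _root_.id · x) atTop (𝓝 y) := by
  set h := f.isCompl_eqLocus_range_sub_one hf
  exact ⟨_, f.tendsto_birkhoffAverage_of_ker_subset_closure hf
    (toContinuousLinearMap (Submodule.projectionOnto _ _ h))
    (Submodule.projectionOnto_apply_left h)
    (by simpa [Submodule.ker_projectionOnto] using subset_closure) x⟩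

end LinearMap

namespace Matrix

variable {S : Type*} [Fintype S] [DecidableEq S]

theorem lipschitzWith_one_toLin' (P : Matrix S S ℝ) (hP : ∀ i, ∑ j, |P i j| ≤ 1) :
    LipschitzWith 1 (toLin' P) := by
  simpa using AddMonoidHomClass.lipschitz_of_bound (toLin' P) 1 fun v ↦ by
    refine (pi_norm_le_iff_of_nonneg (by positivity)).2 fun i ↦ ?_
    calc ‖(P *ᵥ v) i‖ ≤ ∑ j, |P i j| * ‖v‖ :=
          (norm_sum_le _ _).trans <| Finset.sum_le_sum fun j _ ↦ by
            rw [norm_mul, Real.norm_eq_abs]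
            exact mul_le_mul_of_nonneg_left (norm_le_pi_norm v j) (abs_nonneg _)
      _ = (∑ j, |P i j|) * ‖v‖ := (Finset.sum_mul ..).symm
      _ ≤ 1 * ‖v‖ := mul_le_mul_of_nonneg_right (hP i) (norm_nonneg v)

theorem iterate_toLin'_apply {R : Type*} [CommSemiring R] (P : Matrix S S R) (k : ℕ)
    (v : S → R) : (toLin' P)^[k] v = (P ^ k) *ᵥ v := by
  rw [← Module.End.pow_apply, ← toLin'_pow, toLin'_apply]

theorem birkhoffAverage_toLin'_col (P : Matrix S S ℝ) (n : ℕ) (i j : S) :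
    birkhoffAverage ℝ (toLin' P) id n (P.col j) i =
      1 / (n : ℝ) * ∑ k ∈ Finset.Icc 1 n, (P ^ k) i j := by
  have hcol : ∀ k : ℕ, (toLin' P)^[k] (P.col j) i = (P ^ (k + 1)) i j := fun k ↦ by
    rw [← mulVec_single_one, ← toLin'_apply, ← Function.iterate_succ_apply,
      iterate_toLin'_apply, mulVec_single_one, col_apply]
  simp only [birkhoffAverage, birkhoffSum, id, Pi.smul_apply, Finset.sum_apply, hcol,
    smul_eq_mul, one_div]
  rw [Finset.range_eq_Ico, Finset.sum_Ico_add' (fun k ↦ (P ^ k) i j) 0 n 1, zero_add,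
    Finset.Ico_add_one_right_eq_Icc]

end Matrix

theorem stmt11_general {S : Type*} [Fintype S] [DecidableEq S]
    (P : Matrix S S ℝ) (hnn : ∀ i j, 0 ≤ P i j) (hrow : ∀ i, ∑ j, P i j = 1) :
    ∃ L : Matrix S S ℝ, ∀ i j,
      Tendsto (fun n : ℕ => (1 / (n : ℝ)) * ∑ k ∈ Finset.Icc 1 n, (P ^ k) i j)
        atTop (nhds (L i j)) := by
  have hlip : LipschitzWith 1 (Matrix.toLin' P) :=
    P.lipschitzWith_one_toLin' fun i ↦ by simp_rw [abs_of_nonneg (hnn i _), hrow, le_refl]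
  choose L hL using fun j ↦ (Matrix.toLin' P).exists_tendsto_birkhoffAverage hlip (P.col j)
  refine ⟨Matrix.of fun i j ↦ L j i, fun i j ↦ ?_⟩
  simpa only [← P.birkhoffAverage_toLin'_col, Matrix.of_apply] using tendsto_pi_nhds.1 (hL j) i

theorem stmt11 {S : Type*} [Fintype S] [Nonempty S] [DecidableEq S]
    (P : Matrix S S ℝ) (hnn : ∀ i j, 0 ≤ P i j) (hrow : ∀ i, ∑ j, P i j = 1) :
    ∃ L : Matrix S S ℝ, ∀ i j,
      Tendsto (fun n : ℕ => (1 / (n : ℝ)) * ∑ k ∈ Finset.Icc 1 n, (P ^ k) i j)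
        atTop (nhds (L i j)) :=
  stmt11_general P hnn hrow
end

section
/- Let Γ > 0 and let ν be a Borel probability measure on ℝ. Then there exists a Borel probability measure μ on ℝ, supported on [0, Γ], that is invariant for the finite-buffer recursion: if E and η are independent random variables with E ∼ μ and η ∼ ν, then min(Γ, max(0, E + η)) ∼ μ. Equivalently, the pushforward of the product measure μ ⊗ ν under the map (e, y) ↦ min(Γ, max(0, e + y)) equals μ. -/
/-!
The distribution function `F` of an invariant law must vanish on `(-∞, 0)`, equal `1` on
`[Γ, ∞)`, and satisfy `F x = ∫ F (x - y) dν(y)` on `[0, Γ)`. The right-hand sides of these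
equations define a monotone operator on the complete lattice of monotone functions
`ℝ → ℝ≥0∞`, so by Knaster–Tarski it has a (least) fixed point. That fixed point need not be
right-continuous, but by dominated convergence its right-continuous regularisation solves the
same equations, and is therefore the distribution function of an invariant law.
-/

open MeasureTheory Set Filter Topology
open scoped ENNReal

lemma tendsto_lintegral_comp_sub_nhdsGT {μ : Measure ℝ} [IsFiniteMeasure μ] {F G : ℝ → ℝ≥0∞}
    {C : ℝ≥0∞} (hF : Measurable F) (hFC : ∀ z, F z ≤ C) (hC : C ≠ ∞)
    (hFG : ∀ z, Tendsto F (𝓝[>] z) (𝓝 (G z))) (x : ℝ) :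
    Tendsto (fun x' => ∫⁻ y, F (x' - y) ∂μ) (𝓝[>] x) (𝓝 (∫⁻ y, G (x - y) ∂μ)) := by
  refine tendsto_lintegral_filter_of_dominated_convergence (fun _ => C)
    (Eventually.of_forall fun x' => hF.comp (measurable_const.sub measurable_id))
    (Eventually.of_forall fun x' => ae_of_all _ fun y => hFC _)
    (by simpa using ENNReal.mul_ne_top hC (measure_ne_top μ univ)) (ae_of_all _ fun y => ?_)
  have hshift : Tendsto (· - y) (𝓝[>] x) (𝓝[>] (x - y)) :=
    (continuous_sub_right y).continuousWithinAt.tendsto_nhdsWithin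
      fun z hz => sub_lt_sub_right hz y
  exact (hFG (x - y)).comp hshift

lemma MeasureTheory.Measure.prod_setOf_add_le {μ ν : Measure ℝ} [SFinite μ] [SFinite ν]
    (x : ℝ) : μ.prod ν {p | p.1 + p.2 ≤ x} = ∫⁻ y, μ (Iic (x - y)) ∂ν := by
  rw [Measure.prod_apply_symm (measurableSet_le (by fun_prop) measurable_const)]
  congr with y
  congr 1
  ext e
  simp [le_sub_iff_add_le]

namespace FiniteBuffer

variable {Γ : ℝ} {ν : Measure ℝ}

variable (Γ ν) in
/-- The truncation `min 1` keeps `cdfStep Γ ν F` monotone for every monotone `F`. -/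
noncomputable def cdfStep (F : ℝ → ℝ≥0∞) (x : ℝ) : ℝ≥0∞ :=
  if Γ ≤ x then 1 else if x < 0 then 0 else min 1 (∫⁻ y, F (x - y) ∂ν)

lemma cdfStep_le_one (F : ℝ → ℝ≥0∞) (x : ℝ) : cdfStep Γ ν F x ≤ 1 := by
  unfold cdfStep
  split_ifs <;> simp

lemma cdfStep_mono {F G : ℝ → ℝ≥0∞} (h : F ≤ G) : cdfStep Γ ν F ≤ cdfStep Γ ν G := by
  intro x
  unfold cdfStep
  split_ifs
  · exact le_rfl
  · exact le_rfl
  · exact min_le_min le_rfl (lintegral_mono fun y => h _)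

lemma monotone_cdfStep {F : ℝ → ℝ≥0∞} (hF : Monotone F) : Monotone (cdfStep Γ ν F) := by
  intro x x' hxx'
  unfold cdfStep
  split_ifs <;>
    first
    | exact le_rfl
    | exact bot_le
    | exact min_le_left _ _
    | (exfalso; linarith)
    | exact min_le_min le_rfl (lintegral_mono fun y => hF (by linarith))


variable (Γ ν) in
noncomputable def cdfStepHom : (ℝ →o ℝ≥0∞) →o (ℝ →o ℝ≥0∞) where
  toFun F := ⟨cdfStep Γ ν F, monotone_cdfStep F.monotone⟩
  monotone' _ _ h := cdfStep_mono h

variable (Γ ν) in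
noncomputable def minimalCDF : ℝ →o ℝ≥0∞ := (cdfStepHom Γ ν).lfp

lemma cdfStep_minimalCDF : cdfStep Γ ν (minimalCDF Γ ν) = minimalCDF Γ ν :=
  congrArg DFunLike.coe (cdfStepHom Γ ν).map_lfp

lemma minimalCDF_le_one (x : ℝ) : minimalCDF Γ ν x ≤ 1 := by
  rw [← cdfStep_minimalCDF]
  exact cdfStep_le_one _ x

lemma minimalCDF_ne_top (x : ℝ) : minimalCDF Γ ν x ≠ ∞ :=
  ne_top_of_le_ne_top ENNReal.one_ne_top (minimalCDF_le_one x)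

lemma minimalCDF_of_le {x : ℝ} (hx : Γ ≤ x) : minimalCDF Γ ν x = 1 := by
  rw [← cdfStep_minimalCDF, cdfStep, if_pos hx]

lemma minimalCDF_of_lt_min {x : ℝ} (hx : x < min Γ 0) : minimalCDF Γ ν x = 0 := by
  rw [← cdfStep_minimalCDF, cdfStep, if_neg (not_le.2 (lt_min_iff.1 hx).1),
    if_pos (lt_min_iff.1 hx).2]

lemma minimalCDF_eq_lintegral [IsProbabilityMeasure ν] {x : ℝ} (hx0 : 0 ≤ x) (hxΓ : x < Γ) :
    minimalCDF Γ ν x = ∫⁻ y, minimalCDF Γ ν (x - y) ∂ν := by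
  rw [← cdfStep_minimalCDF, cdfStep, if_neg (not_le.2 hxΓ), if_neg (not_lt.2 hx0),
    cdfStep_minimalCDF, min_eq_right]
  calc ∫⁻ y, minimalCDF Γ ν (x - y) ∂ν ≤ ∫⁻ _, 1 ∂ν := lintegral_mono fun y => minimalCDF_le_one _
    _ = 1 := by simp

lemma monotone_toReal_minimalCDF : Monotone fun x => (minimalCDF Γ ν x).toReal :=
  fun _ _ h => ENNReal.toReal_mono (minimalCDF_ne_top _) ((minimalCDF Γ ν).monotone h)

variable (Γ ν) in
noncomputable def invariantCDF : StieltjesFunction ℝ :=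
  (monotone_toReal_minimalCDF (Γ := Γ) (ν := ν)).stieltjesFunction

lemma tendsto_minimalCDF_nhdsGT (x : ℝ) :
    Tendsto (minimalCDF Γ ν) (𝓝[>] x) (𝓝 (ENNReal.ofReal (invariantCDF Γ ν x))) := by
  have := (ENNReal.continuous_ofReal.tendsto _).comp
    ((monotone_toReal_minimalCDF (Γ := Γ) (ν := ν)).tendsto_rightLim x)
  simp only [Function.comp_def, ENNReal.ofReal_toReal (minimalCDF_ne_top _)] at this
  exact this

lemma invariantCDF_of_lt_min {x : ℝ} (hx : x < min Γ 0) : invariantCDF Γ ν x = 0 := by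
  refine rightLim_eq_of_tendsto (tendsto_const_nhds.congr' ?_)
  filter_upwards [Ioo_mem_nhdsGT hx] with x' hx'
  simp [minimalCDF_of_lt_min hx'.2]

lemma invariantCDF_of_le {x : ℝ} (hx : Γ ≤ x) : invariantCDF Γ ν x = 1 := by
  refine rightLim_eq_of_tendsto (tendsto_const_nhds.congr' ?_)
  filter_upwards [self_mem_nhdsWithin] with x' (hx' : x < x')
  simp [minimalCDF_of_le (hx.trans hx'.le)]

lemma ofReal_invariantCDF_eq_lintegral [IsProbabilityMeasure ν] {x : ℝ} (hx0 : 0 ≤ x)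
    (hxΓ : x < Γ) :
    ENNReal.ofReal (invariantCDF Γ ν x) = ∫⁻ y, ENNReal.ofReal (invariantCDF Γ ν (x - y)) ∂ν := by
  refine tendsto_nhds_unique (tendsto_minimalCDF_nhdsGT x) (Tendsto.congr' ?_
    (tendsto_lintegral_comp_sub_nhdsGT (minimalCDF Γ ν).monotone.measurable minimalCDF_le_one
      ENNReal.one_ne_top tendsto_minimalCDF_nhdsGT x))
  filter_upwards [Ioo_mem_nhdsGT hxΓ] with x' hx'
  exact (minimalCDF_eq_lintegral (hx0.trans hx'.1.le) hx'.2).symm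

lemma tendsto_invariantCDF_atBot : Tendsto (invariantCDF Γ ν) atBot (𝓝 0) := by
  refine tendsto_const_nhds.congr' ?_
  filter_upwards [eventually_lt_atBot (min Γ 0)] with x hx
  exact (invariantCDF_of_lt_min hx).symm

lemma tendsto_invariantCDF_atTop : Tendsto (invariantCDF Γ ν) atTop (𝓝 1) := by
  refine tendsto_const_nhds.congr' ?_
  filter_upwards [eventually_ge_atTop Γ] with x hx
  exact (invariantCDF_of_le hx).symm

variable (Γ ν) in
noncomputable def invariantMeasure : Measure ℝ := (invariantCDF Γ ν).measure

instance : IsProbabilityMeasure (invariantMeasure Γ ν) :=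
  (invariantCDF Γ ν).isProbabilityMeasure tendsto_invariantCDF_atBot tendsto_invariantCDF_atTop

lemma invariantMeasure_Iic (x : ℝ) :
    invariantMeasure Γ ν (Iic x) = ENNReal.ofReal (invariantCDF Γ ν x) := by
  rw [invariantMeasure, (invariantCDF Γ ν).measure_Iic tendsto_invariantCDF_atBot, sub_zero]

theorem map_clamp_add_invariantMeasure_prod [IsProbabilityMeasure ν] :
    ((invariantMeasure Γ ν).prod ν).map (fun p : ℝ × ℝ => min Γ (max 0 (p.1 + p.2))) =
      invariantMeasure Γ ν := by
  set f : ℝ × ℝ → ℝ := fun p => min Γ (max 0 (p.1 + p.2))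
  have hf : Measurable f := by fun_prop
  have := Measure.isProbabilityMeasure_map (μ := (invariantMeasure Γ ν).prod ν) hf.aemeasurable
  refine Measure.ext_of_Iic _ _ fun x => ?_
  rw [Measure.map_apply hf measurableSet_Iic, invariantMeasure_Iic]
  rcases le_or_gt Γ x with hΓx | hxΓ
  · have hpre : f ⁻¹' Iic x = univ := eq_univ_of_forall fun p => (min_le_left _ _).trans hΓx
    rw [hpre, measure_univ, invariantCDF_of_le hΓx, ENNReal.ofReal_one]
  rcases lt_or_ge x 0 with hx0 | hx0
  · have hpre : f ⁻¹' Iic x = ∅ := eq_empty_of_forall_notMem fun p hp => by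
      simp only [f, mem_preimage, mem_Iic, min_le_iff, max_le_iff] at hp
      rcases hp with h | ⟨h, -⟩ <;> linarith
    rw [hpre, measure_empty, invariantCDF_of_lt_min (lt_min hxΓ hx0), ENNReal.ofReal_zero]
  · have hpre : f ⁻¹' Iic x = {p | p.1 + p.2 ≤ x} := by
      ext p
      simp only [f, mem_preimage, mem_Iic, mem_ofPred_eq, min_le_iff, max_le_iff]
      constructor
      · rintro (h | ⟨-, h⟩)
        · linarith
        · exact h
      · exact fun h => Or.inr ⟨hx0, h⟩
    simp_rw [hpre, Measure.prod_setOf_add_le, invariantMeasure_Iic]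
    exact (ofReal_invariantCDF_eq_lintegral hx0 hxΓ).symm

end FiniteBuffer

open FiniteBuffer

theorem stmt12 (Γ : ℝ) (hΓ : 0 < Γ) (ν : Measure ℝ) [IsProbabilityMeasure ν] :
    ∃ μ : Measure ℝ, IsProbabilityMeasure μ ∧ μ (Set.Icc 0 Γ)ᶜ = 0 ∧
      Measure.map (fun p : ℝ × ℝ => min Γ (max 0 (p.1 + p.2))) (μ.prod ν) = μ := by
  refine ⟨invariantMeasure Γ ν, inferInstance, ?_, map_clamp_add_invariantMeasure_prod⟩
  have hrange : (fun p : ℝ × ℝ => min Γ (max 0 (p.1 + p.2))) ⁻¹' Icc 0 Γ = univ :=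
    eq_univ_of_forall fun p => ⟨le_min hΓ.le (le_max_left _ _), min_le_left _ _⟩
  rw [← map_clamp_add_invariantMeasure_prod,
    Measure.map_apply (by fun_prop) measurableSet_Icc.compl, preimage_compl, hrange, compl_univ,
    measure_empty]
end
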